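/- Let γ = 2 and α = 1 in one dimension. If x_1 < x_2 < … < x_n is a global minimizer of E_n(x) = Σ_{i≠j} (|x_i−x_j|²/2 − |x_i−x_j|), then the points are equally spaced with x_{k+1} − x_k = 2/n for all k = 1,…,n−1. -/

import Mathlib

/-!
Since `w(r) = r²/2 - r`, the energy is `∑ (xᵢ - xⱼ)²/2 - ∑ |xᵢ - xⱼ|`. Replacing each
`|xᵢ - xⱼ|` by `sign (zᵢ - zⱼ) * (xᵢ - xⱼ)` for a fixed configuration `z` gives a quadratic
function of `x` that dominates the energy and agrees with it at `x = z`. Hence a minimizer `z` of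
the energy also minimizes this quadratic, and its partial derivatives vanish there:
`∑ⱼ (z_k - z_j) = ∑ⱼ sign (z_k - z_j)` for every `k`. For ordered points the right-hand side
grows by exactly `2` from one index to the next, and the left-hand side by `n` times the gap.
-/

open Finset

noncomputable def En1 (n : ℕ) (x : Fin n → ℝ) : ℝ :=
  ∑ i, ∑ j, if i = j then 0 else |x i - x j| ^ 2 / 2 - |x i - x j|

theorem Real.sign_mul_self_eq_abs (r : ℝ) : Real.sign r * r = |r| := by
  rcases lt_trichotomy r 0 with h | rfl | h
  · rw [Real.sign_of_neg h, abs_of_neg h]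
    ring
  · simp
  · rw [Real.sign_of_pos h, abs_of_pos h, one_mul]

theorem sum_sum_mul_sub_of_antisymm {ι : Type*} [Fintype ι] (g : ι → ι → ℝ)
    (hg : ∀ i j, g j i = -g i j) (v : ι → ℝ) :
    ∑ i, ∑ j, g i j * (v i - v j) = 2 * ∑ i, v i * ∑ j, g i j := by
  have hfirst : ∑ i, ∑ j, g i j * v i = ∑ i, v i * ∑ j, g i j := by
    refine sum_congr rfl fun i _ => ?_
    rw [mul_sum]
    exact sum_congr rfl fun j _ => mul_comm _ _
  have hsecond : ∑ i, ∑ j, g i j * v j = -∑ i, v i * ∑ j, g i j := by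
    rw [sum_comm, ← sum_neg_distrib]
    refine sum_congr rfl fun i _ => ?_
    rw [mul_sum, ← sum_neg_distrib]
    exact sum_congr rfl fun j _ => by rw [hg]; ring
  simp only [mul_sub, sum_sub_distrib, hfirst, hsecond]
  ring

theorem sum_sign_sub_sign_of_covBy {ι : Type*} [Fintype ι] [LinearOrder ι] {x : ι → ℝ}
    (hx : StrictMono x) {a b : ι} (hab : a ⋖ b) :
    ∑ j, (Real.sign (x b - x j) - Real.sign (x a - x j)) = 2 := by
  have hxab : x a < x b := hx hab.lt
  rw [Fintype.sum_eq_add a b hab.lt.ne fun j ⟨hja, hjb⟩ => ?_]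
  · rw [sub_self, sub_self, Real.sign_zero, Real.sign_of_pos (sub_pos.2 hxab),
      Real.sign_of_neg (sub_neg.2 hxab)]
    norm_num
  · rcases hja.lt_or_gt with hja | haj
    · have hjb := hja.trans hab.lt
      rw [Real.sign_of_pos (sub_pos.2 (hx hjb)), Real.sign_of_pos (sub_pos.2 (hx hja)), sub_self]
    · have hbj : b < j := lt_of_le_of_ne (not_lt.1 (hab.2 haj)) hjb.symm
      rw [Real.sign_of_neg (sub_neg.2 (hx hbj)), Real.sign_of_neg (sub_neg.2 (hx haj)),
        sub_self]

noncomputable def frozenSignEnergy {ι : Type*} [Fintype ι] (z x : ι → ℝ) : ℝ :=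
  ∑ i, ∑ j, ((x i - x j) ^ 2 / 2 - Real.sign (z i - z j) * (x i - x j))

section FrozenSignEnergy

variable {ι : Type*} [Fintype ι]

theorem frozenSignEnergy_add_smul (z x v : ι → ℝ) (t : ℝ) :
    frozenSignEnergy z (x + t • v) = frozenSignEnergy z x +
      t * ∑ i, ∑ j, (x i - x j - Real.sign (z i - z j)) * (v i - v j) +
      t ^ 2 * ∑ i, ∑ j, (v i - v j) ^ 2 / 2 := by
  simp only [frozenSignEnergy, mul_sum, ← sum_add_distrib]
  refine sum_congr rfl fun i _ => sum_congr rfl fun j _ => ?_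
  simp only [Pi.add_apply, Pi.smul_apply, smul_eq_mul]
  ring

theorem sum_sub_eq_sum_sign_of_forall_le {z : ι → ℝ}
    (hmin : ∀ y, frozenSignEnergy z z ≤ frozenSignEnergy z y) (k : ι) :
    ∑ j, (z k - z j) = ∑ j, Real.sign (z k - z j) := by
  classical
  set g : ι → ι → ℝ := fun i j => z i - z j - Real.sign (z i - z j)
  have hg : ∀ i j, g j i = -g i j := fun i j => by
    simp only [g, ← neg_sub (z i) (z j), Real.sign_neg]
    ring
  set v : ι → ℝ := Pi.single k 1
  set b := ∑ i, ∑ j, g i j * (v i - v j)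
  have hb : b = 2 * ∑ j, g k j := by
    simp [b, sum_sum_mul_sub_of_antisymm g hg, v, Pi.single_apply]
  have hquad : ∀ t : ℝ, 0 ≤ (∑ i, ∑ j, (v i - v j) ^ 2 / 2) * (t * t) + b * t + 0 := fun t => by
    have := hmin (z + t • v)
    rw [frozenSignEnergy_add_smul] at this
    nlinarith
  have hb0 : b = 0 := by simpa [discrim] using discrim_le_zero hquad
  rw [← sub_eq_zero, ← sum_sub_distrib]
  linarith

end FrozenSignEnergy

theorem En1_le_frozenSignEnergy {n : ℕ} (z y : Fin n → ℝ) : En1 n y ≤ frozenSignEnergy z y := by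
  refine sum_le_sum fun i _ => sum_le_sum fun j _ => ?_
  split_ifs with hij
  · simp [hij]
  · rw [sq_abs]
    have : Real.sign (z i - z j) * (y i - y j) ≤ |y i - y j| := by
      rcases Real.sign_apply_eq (z i - z j) with h | h | h <;> rw [h]
      · linarith [neg_abs_le (y i - y j)]
      · simp
      · linarith [le_abs_self (y i - y j)]
    linarith

theorem frozenSignEnergy_self {n : ℕ} (x : Fin n → ℝ) : frozenSignEnergy x x = En1 n x := by
  refine sum_congr rfl fun i _ => sum_congr rfl fun j _ => ?_
  split_ifs with hij
  · simp [hij]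
  · rw [sq_abs, Real.sign_mul_self_eq_abs]

theorem stmt_18_general (n : ℕ) (x : Fin n → ℝ) (hx : StrictMono x)
    (hmin : ∀ y : Fin n → ℝ, En1 n x ≤ En1 n y) :
    ∀ i : Fin n, ∀ h1 : (i : ℕ) + 1 < n, x ⟨(i : ℕ) + 1, h1⟩ - x i = 2 / n := by
  intro i h1
  set j : Fin n := ⟨i + 1, h1⟩
  have hcov : i ⋖ j := Fin.covBy_iff.2 (Order.covBy_add_one _)
  have hfrozen : ∀ y, frozenSignEnergy x x ≤ frozenSignEnergy x y := fun y =>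
    (frozenSignEnergy_self x).trans_le ((hmin y).trans (En1_le_frozenSignEnergy x y))
  have hi := sum_sub_eq_sum_sign_of_forall_le hfrozen i
  have hj := sum_sub_eq_sum_sign_of_forall_le hfrozen j
  have hgap : (n : ℝ) * (x j - x i) = 2 := by
    calc (n : ℝ) * (x j - x i) = ∑ l, (x j - x l) - ∑ l, (x i - x l) := by
          simp [← sum_sub_distrib, mul_sub]
      _ = ∑ l, (Real.sign (x j - x l) - Real.sign (x i - x l)) := by
          rw [hi, hj, sum_sub_distrib]
      _ = 2 := sum_sign_sub_sign_of_covBy hx hcov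
  exact (eq_div_iff (Nat.cast_pos.2 i.pos).ne').2 (by linarith)

theorem stmt_18 (n : ℕ) (hn : 2 ≤ n) (x : Fin n → ℝ) (hx : StrictMono x)
    (hmin : ∀ y : Fin n → ℝ, En1 n x ≤ En1 n y) :
    ∀ i : Fin n, ∀ h1 : (i : ℕ) + 1 < n, x ⟨(i : ℕ) + 1, h1⟩ - x i = 2 / n :=
  stmt_18_general n x hx hmin
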